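/- arXiv:1811.07464 — 6 statements merged into one kernel-verified Lean document; each statement's English description precedes it below -/
import Mathlib

section
/- Let 0 < ε < 1, let M₀ > 0 be a real number, and let k ≥ 1 and N ≥ 1 be integers with (1−ε)^N ≤ (ε/k)². Let B be a finite set with |B| ≤ k and let w, v : B → ℝ be functions such that: (i) 0 ≤ v(e) ≤ w(e) for every e ∈ B; (ii) every e ∈ B either satisfies w(e) = (1−ε)^{j−1} M₀ for some j ∈ {1,…,N} (in which case we say e lies in bucket j), or satisfies 0 ≤ w(e) ≤ (1−ε)^N M₀; and (iii) for each j ∈ {1,…,N}, at least half of the elements e of bucket j satisfy v(e) ≥ (1−ε) w(e). Then Σ_{e∈B} v(e) ≥ ((1−ε)/2) · Σ_{e∈B} w(e) − (ε²/k) M₀. -/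
/-!
Outside the buckets every weight is at most `(1-ε)^N M₀ ≤ (ε/k)² M₀`, so those at most `k`
elements carry total weight at most `(ε²/k) M₀`. Inside a bucket `w` is constant, so the half
of its elements with `v ≥ (1-ε) w` already recover `(1-ε)/2` of the bucket's weight. Grouping
the bucketed elements by their value of `w` (rather than by bucket index) makes the buckets
disjoint for free.
-/

open scoped Classical BigOperators

open Finset

section

variable {α : Type*}

lemma half_mul_sum_le_sum_of_eq_const {s : Finset α} {w v : α → ℝ} {c θ : ℝ}
    (hθ : 0 ≤ θ) (hc : 0 ≤ c) (hw : ∀ e ∈ s, w e = c) (hv : ∀ e ∈ s, 0 ≤ v e)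
    (hcard : #s ≤ 2 * #{e ∈ s | θ * w e ≤ v e}) :
    θ / 2 * ∑ e ∈ s, w e ≤ ∑ e ∈ s, v e := by
  set G := {e ∈ s | θ * w e ≤ v e}
  have hcard' : (#s : ℝ) ≤ 2 * #G := by exact_mod_cast hcard
  calc θ / 2 * ∑ e ∈ s, w e = θ / 2 * (#s * c) := by
        rw [sum_congr rfl hw, sum_const, nsmul_eq_mul]
    _ ≤ #G * (θ * c) := by nlinarith [mul_nonneg hθ hc]
    _ = ∑ e ∈ G, θ * c := by rw [sum_const, nsmul_eq_mul]
    _ ≤ ∑ e ∈ G, v e := sum_le_sum fun e he => by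
        simpa only [mem_filter, hw e (mem_filter.1 he).1] using (mem_filter.1 he).2
    _ ≤ ∑ e ∈ s, v e := sum_le_sum_of_subset_of_nonneg (filter_subset _ _)
        fun e he _ => hv e he

lemma half_mul_sum_le_sum_of_card_fiber_le {s : Finset α} {w v : α → ℝ} {θ : ℝ} (hθ : 0 ≤ θ)
    (hvw : ∀ e ∈ s, 0 ≤ v e ∧ v e ≤ w e)
    (hcard : ∀ c, #{e ∈ s | w e = c} ≤ 2 * #{e ∈ s | w e = c ∧ θ * w e ≤ v e}) :
    θ / 2 * ∑ e ∈ s, w e ≤ ∑ e ∈ s, v e := by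
  have hmaps : ∀ e ∈ s, w e ∈ s.image w := fun e he => mem_image_of_mem w he
  rw [← sum_fiberwise_of_maps_to hmaps, ← sum_fiberwise_of_maps_to hmaps, mul_sum]
  refine sum_le_sum fun c hc => half_mul_sum_le_sum_of_eq_const (c := c) hθ ?_ ?_ ?_ ?_
  · obtain ⟨e, he, rfl⟩ := mem_image.1 hc
    exact (hvw e he).1.trans (hvw e he).2
  · exact fun e he => (mem_filter.1 he).2
  · exact fun e he => (hvw e (mem_filter.1 he).1).1
  · simpa only [filter_filter] using hcard c

lemma mul_div_sq_eq_sq_div (k x : ℝ) : k * (x / k) ^ 2 = x ^ 2 / k := by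
  rcases eq_or_ne k 0 with rfl | hk
  · simp
  · field_simp

lemma sum_le_sq_div_mul {s : Finset α} {f : α → ℝ} {k : ℕ} {x b M : ℝ} (hs : #s ≤ k)
    (hb : 0 ≤ b) (hf : ∀ e ∈ s, f e ≤ b) (hbM : b ≤ (x / k) ^ 2 * M) :
    ∑ e ∈ s, f e ≤ x ^ 2 / k * M := by
  have hs' : (#s : ℝ) ≤ k := by exact_mod_cast hs
  calc ∑ e ∈ s, f e ≤ #s * b := by simpa using sum_le_card_nsmul s f b hf
    _ ≤ k * ((x / k) ^ 2 * M) := mul_le_mul hs' hbM hb (Nat.cast_nonneg k)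
    _ = x ^ 2 / k * M := by rw [← mul_assoc, mul_div_sq_eq_sq_div]

end

theorem stmt0_general {α : Type*} (ε M₀ : ℝ) (k N : ℕ) (B : Finset α) (w v : α → ℝ)
    (hε0 : 0 < ε) (hε1 : ε < 1) (hM : 0 < M₀)
    (hNk : (1 - ε) ^ N ≤ (ε / k) ^ 2)
    (hB : B.card ≤ k)
    (hvw : ∀ e ∈ B, 0 ≤ v e ∧ v e ≤ w e)
    (hbucket : ∀ e ∈ B,
      (∃ j ∈ Finset.Icc 1 N, w e = (1 - ε) ^ (j - 1) * M₀) ∨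
      (0 ≤ w e ∧ w e ≤ (1 - ε) ^ N * M₀))
    (hhalf : ∀ j ∈ Finset.Icc 1 N,
      (B.filter (fun e => w e = (1 - ε) ^ (j - 1) * M₀)).card ≤
        2 * (B.filter (fun e => w e = (1 - ε) ^ (j - 1) * M₀ ∧
          v e ≥ (1 - ε) * w e)).card) :
    ∑ e ∈ B, v e ≥ (1 - ε) / 2 * ∑ e ∈ B, w e - ε ^ 2 / k * M₀ := by
  set P : α → Prop := fun e => ∃ j ∈ Icc 1 N, w e = (1 - ε) ^ (j - 1) * M₀
  have hbuckets : (1 - ε) / 2 * ∑ e ∈ B with P e, w e ≤ ∑ e ∈ B with P e, v e := by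
    refine half_mul_sum_le_sum_of_card_fiber_le (by linarith)
      (fun e he => hvw e (mem_filter.1 he).1) fun c => ?_
    simp only [filter_filter]
    by_cases hc : ∃ j ∈ Icc 1 N, c = (1 - ε) ^ (j - 1) * M₀
    · obtain ⟨j, hj, rfl⟩ := hc
      convert hhalf j hj using 3 <;> grind
    · have hempty : {e ∈ B | P e ∧ w e = c} = ∅ :=
        filter_false_of_mem fun e _ ⟨⟨j, hj, hw⟩, hwc⟩ => hc ⟨j, hj, hwc ▸ hw⟩
      rw [hempty, card_empty]
      exact Nat.zero_le _
  have htail : ∑ e ∈ B with ¬P e, w e ≤ ε ^ 2 / k * M₀ := by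
    refine sum_le_sq_div_mul ((card_filter_le _ _).trans hB) (by positivity)
      (fun e he => ?_) (mul_le_mul_of_nonneg_right hNk hM.le)
    rw [mem_filter] at he
    exact ((hbucket e he.1).resolve_left he.2).2
  have htail_v : 0 ≤ ∑ e ∈ B with ¬P e, v e :=
    sum_nonneg fun e he => (hvw e (mem_filter.1 he).1).1
  have htail_w : 0 ≤ ∑ e ∈ B with ¬P e, w e :=
    sum_nonneg fun e he => (hvw e (mem_filter.1 he).1).1.trans (hvw e (mem_filter.1 he).1).2
  have htail_scaled : (1 - ε) / 2 * ∑ e ∈ B with ¬P e, w e ≤ ∑ e ∈ B with ¬P e, w e := by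
    nlinarith
  rw [← sum_filter_add_sum_filter_not B P v, ← sum_filter_add_sum_filter_not B P w]
  linarith

/-- If the cached weights `w` on a set `B` lie on the geometric grid
`(1-ε)^(j-1) * M₀` (buckets `j = 1, …, N`) or are at most `(1-ε)^N * M₀`, the true
values `v` satisfy `0 ≤ v ≤ w`, and in every bucket at least half of the elements
satisfy `v e ≥ (1-ε) * w e`, then
`∑ v ≥ ((1-ε)/2) * ∑ w - (ε²/k) * M₀`. -/
theorem stmt0 {α : Type*} (ε M₀ : ℝ) (k N : ℕ) (B : Finset α) (w v : α → ℝ)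
    (hε0 : 0 < ε) (hε1 : ε < 1) (hM : 0 < M₀) (hk : 1 ≤ k) (hN : 1 ≤ N)
    (hNk : (1 - ε) ^ N ≤ (ε / k) ^ 2)
    (hB : B.card ≤ k)
    (hvw : ∀ e ∈ B, 0 ≤ v e ∧ v e ≤ w e)
    (hbucket : ∀ e ∈ B,
      (∃ j ∈ Finset.Icc 1 N, w e = (1 - ε) ^ (j - 1) * M₀) ∨
      (0 ≤ w e ∧ w e ≤ (1 - ε) ^ N * M₀))
    (hhalf : ∀ j ∈ Finset.Icc 1 N,
      (B.filter (fun e => w e = (1 - ε) ^ (j - 1) * M₀)).card ≤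
        2 * (B.filter (fun e => w e = (1 - ε) ^ (j - 1) * M₀ ∧
          v e ≥ (1 - ε) * w e)).card) :
    ∑ e ∈ B, v e ≥ (1 - ε) / 2 * ∑ e ∈ B, w e - ε ^ 2 / k * M₀ :=
  stmt0_general ε M₀ k N B w v hε0 hε1 hM hNk hB hvw hbucket hhalf
end

section
/- Let M be a matroid on a finite ground set V, let S be an independent set of M, and let f : 2^V → ℝ be a monotone submodular set function. Let w : V \ S → ℝ satisfy w(e) ≥ 0 and w(e) ≥ f(S ∪ {e}) − f(S) for every e ∈ V \ S, and let B be a base of the contraction M/S that maximizes Σ_{e∈B} w(e) over all bases of M/S. Then for every S' ⊆ V \ S such that S' ∪ S is independent in M, Σ_{e∈S'} (f(S ∪ {e}) − f(S)) ≤ Σ_{e∈B} w(e). -/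
open scoped BigOperators

/-- `B` is a base of the contraction `M/S`: it is a maximal subset of `M.E \ S`
whose union with `S` is independent in `M`. -/
def Matroid.ContractBase {α : Type*} (M : Matroid α) (S B : Set α) : Prop :=
  Maximal (fun I => I ⊆ M.E \ S ∧ M.Indep (I ∪ S)) B

theorem finsum_mem_le_finsum_mem_of_subset {α M : Type*} [AddCommMonoid M] [PartialOrder M]
    [IsOrderedAddMonoid M] {f g : α → M} {s t : Set α} (ht : t.Finite) (hst : s ⊆ t)
    (hfg : ∀ e ∈ s, f e ≤ g e) (hg : ∀ e ∈ t \ s, 0 ≤ g e) :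
    ∑ᶠ e ∈ s, f e ≤ ∑ᶠ e ∈ t, g e := by
  have hs : s.Finite := ht.subset hst
  rw [finsum_mem_eq_finite_toFinset_sum _ hs, finsum_mem_eq_finite_toFinset_sum _ ht]
  calc ∑ e ∈ hs.toFinset, f e ≤ ∑ e ∈ hs.toFinset, g e :=
        Finset.sum_le_sum fun e he => hfg e (hs.mem_toFinset.mp he)
    _ ≤ ∑ e ∈ ht.toFinset, g e :=
        Finset.sum_le_sum_of_subset_of_nonneg (Set.Finite.toFinset_subset_toFinset.mpr hst)
          fun e he he' => hg e ⟨ht.mem_toFinset.mp he, fun h => he' (hs.mem_toFinset.mpr h)⟩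

theorem Matroid.exists_contractBase_superset {α : Type*} (M : Matroid α) [M.Finite]
    {S I : Set α} (hI : I ⊆ M.E \ S) (hIS : M.Indep (I ∪ S)) :
    ∃ B, M.ContractBase S B ∧ I ⊆ B := by
  have hfin : {J | J ⊆ M.E \ S ∧ M.Indep (J ∪ S)}.Finite :=
    M.ground_finite.sdiff.finite_subsets.subset fun _ hJ => hJ.1
  obtain ⟨B, hIB, hB⟩ := hfin.exists_le_maximal (a := I) ⟨hI, hIS⟩
  exact ⟨B, hB, hIB⟩

theorem stmt2_general {α : Type*} (M : Matroid α) [M.Finite] (S : Set α)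
    (f : Set α → ℝ)
    (w : α → ℝ)
    (hw : ∀ e ∈ M.E \ S, 0 ≤ w e ∧ f (insert e S) - f S ≤ w e)
    (B : Set α)
    (hBmax : ∀ B', M.ContractBase S B' → ∑ᶠ e ∈ B', w e ≤ ∑ᶠ e ∈ B, w e) :
    ∀ S' ⊆ M.E \ S, M.Indep (S' ∪ S) →
      ∑ᶠ e ∈ S', (f (insert e S) - f S) ≤ ∑ᶠ e ∈ B, w e := by
  intro S' hS' hind
  obtain ⟨B', hB', hS'B'⟩ := M.exists_contractBase_superset hS' hind
  have hB'E : B' ⊆ M.E \ S := hB'.prop.1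
  calc ∑ᶠ e ∈ S', (f (insert e S) - f S)
      ≤ ∑ᶠ e ∈ B', w e :=
        finsum_mem_le_finsum_mem_of_subset (M.ground_finite.sdiff.subset hB'E) hS'B'
          (fun e he => (hw e (hS' he)).2) fun e he => (hw e (hB'E he.1)).1
    _ ≤ ∑ᶠ e ∈ B, w e := hBmax B' hB'

/-- If `w ≥ 0` dominates the marginal values `f (S ∪ {e}) - f S` on
`V \ S` and `B` is a maximum `w`-weight base of the contraction `M/S`, then for every
`S' ⊆ V \ S` with `S' ∪ S` independent, the total marginal value of `S'` is at most
the `w`-weight of `B`. -/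
theorem stmt2 {α : Type*} (M : Matroid α) [M.Finite] (S : Set α) (hS : M.Indep S)
    (f : Set α → ℝ)
    (hsub : ∀ A ⊆ M.E, ∀ B ⊆ M.E, f A + f B ≥ f (A ∩ B) + f (A ∪ B))
    (hmono : ∀ A B : Set α, A ⊆ B → B ⊆ M.E → f A ≤ f B)
    (w : α → ℝ)
    (hw : ∀ e ∈ M.E \ S, 0 ≤ w e ∧ f (insert e S) - f S ≤ w e)
    (B : Set α) (hB : M.ContractBase S B)
    (hBmax : ∀ B', M.ContractBase S B' → ∑ᶠ e ∈ B', w e ≤ ∑ᶠ e ∈ B, w e) :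
    ∀ S' ⊆ M.E \ S, M.Indep (S' ∪ S) →
      ∑ᶠ e ∈ S', (f (insert e S) - f S) ≤ ∑ᶠ e ∈ B, w e :=
  stmt2_general M S f w hw B hBmax
end

section
/- Let M be a matroid on a finite ground set V, let w : V → ℝ be a weight function, and let B be a base of M that maximizes Σ_{e∈B} w(e) over all bases of M. Then for every subset S ⊆ B, the set B \ S is a base of the contraction M/S that maximizes Σ_{e∈B'} w(e) over all bases B' of M/S. -/
/-! The bases of `M/S` are exactly the sets `B'` disjoint from `S` with `B' ∪ S` a base of `M`,
so their weights are those of bases of `M` containing `S`, shifted by the constant `w(S)`. -/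

open scoped BigOperators

namespace Matroid

variable {α : Type*} {M : Matroid α} {S B : Set α}

theorem contractBase_iff : M.ContractBase S B ↔ M.IsBase (B ∪ S) ∧ Disjoint B S := by
  constructor
  · rintro ⟨⟨hBE, hBS⟩, hmax⟩
    refine ⟨hBS.isBase_of_forall_insert fun e he hins => ?_,
      Set.disjoint_left.2 fun x hx => (hBE hx).2⟩
    have heS : e ∉ S := fun h => he.2 (Or.inr h)
    have hins_mem : insert e B ⊆ M.E \ S :=
      Set.insert_subset ⟨he.1, heS⟩ hBE
    have := hmax ⟨hins_mem, by rwa [Set.insert_union]⟩ (Set.subset_insert e B)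
    exact he.2 (Or.inl (this (Set.mem_insert e B)))
  · rintro ⟨hbase, hdisj⟩
    refine ⟨⟨fun x hx => ⟨hbase.subset_ground (Or.inl hx), hdisj.notMem_of_mem_left hx⟩,
      hbase.indep⟩, fun I ⟨hIE, hIS⟩ hBI x hx => ?_⟩
    have hBS_eq : B ∪ S = I ∪ S :=
      hbase.eq_of_subset_indep hIS (Set.union_subset_union_left S hBI)
    have hxBS : x ∈ B ∪ S := hBS_eq ▸ Or.inl hx
    obtain hxB | hxS := hxBS
    · exact hxB
    · exact absurd hxS (hIE hx).2

end Matroid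

/-- If `B` is a maximum `w`-weight base of `M`, then for every `S ⊆ B`,
the set `B \ S` is a maximum `w`-weight base of the contraction `M/S`. -/
theorem stmt3 {α : Type*} (M : Matroid α) [M.Finite] (w : α → ℝ)
    (B : Set α) (hB : M.IsBase B)
    (hBmax : ∀ B', M.IsBase B' → ∑ᶠ e ∈ B', w e ≤ ∑ᶠ e ∈ B, w e) :
    ∀ S ⊆ B, M.ContractBase S (B \ S) ∧
      ∀ B', M.ContractBase S B' → ∑ᶠ e ∈ B', w e ≤ ∑ᶠ e ∈ B \ S, w e := by
  intro S hSB
  have hBS : B \ S ∪ S = B := Set.sdiff_union_of_subset hSB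
  refine ⟨Matroid.contractBase_iff.2 ⟨by rwa [hBS], Set.disjoint_sdiff_left⟩, fun B' hB' => ?_⟩
  obtain ⟨hB'S, hdisj⟩ := Matroid.contractBase_iff.1 hB'
  have hfin : ∀ X ⊆ M.E, X.Finite := fun X hX => M.ground_finite.subset hX
  have hSfin := hfin S (hSB.trans hB.subset_ground)
  have hle := hBmax _ hB'S
  rw [finsum_mem_union hdisj (hfin B' fun x hx => hB'S.subset_ground (Or.inl hx)) hSfin,
    ← hBS, finsum_mem_union Set.disjoint_sdiff_left
      (hfin _ fun x hx => hB.subset_ground hx.1) hSfin] at hle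
  linarith
end

section
/- Let M be a matroid on a finite ground set V, let e ∈ V, and let w, w' : V → ℝ be weight functions with w'(e) = w(e) and w'(x) ≤ w(x) for all x ∈ V with x ≠ e. If B is a base of M maximizing Σ_{x∈B} w(x) over all bases and e ∈ B, then there exists a base B' of M with e ∈ B' that maximizes Σ_{x∈B'} w'(x) over all bases of M. -/
/-!
Take a maximum `w'`-weight base `B'`; if `e ∉ B'`, the symmetric exchange property applied to
`B ∋ e` and `B'` gives `f ∈ B' \ B` such that both `B - e + f` and `B' - f + e` are bases.
Maximality of `B` forces `w f ≤ w e`, hence `w' f ≤ w f ≤ w e = w' e`, so `B' - f + e` is a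
maximum `w'`-weight base containing `e`.
-/

open Set

theorem finsum_mem_insert_sdiff_add {α β : Type*} [AddCommMonoid β] (w : α → β) {S : Set α}
    {a b : α} (hS : S.Finite) (ha : a ∉ S) (hb : b ∈ S) :
    ∑ᶠ x ∈ insert a S \ {b}, w x + w b = w a + ∑ᶠ x ∈ S, w x := by
  have hb' : b ∈ insert a S := mem_insert_of_mem a hb
  calc ∑ᶠ x ∈ insert a S \ {b}, w x + w b
      = ∑ᶠ x ∈ insert b (insert a S \ {b}), w x := by
        rw [finsum_mem_insert w (by simp) ((hS.insert a).sdiff), add_comm]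
    _ = w a + ∑ᶠ x ∈ S, w x := by rw [insert_sdiff_self_of_mem hb', finsum_mem_insert w ha hS]

namespace Matroid

variable {α : Type*} {M : Matroid α} {B B₁ B₂ : Set α} {e f : α}

theorem IsBase.exists_symm_exchange (hB₁ : M.IsBase B₁) (hB₂ : M.IsBase B₂) (he : e ∈ B₁ \ B₂) :
    ∃ f ∈ B₂ \ B₁, M.IsBase (insert e B₂ \ {f}) ∧ M.IsBase (insert f B₁ \ {e}) := by
  -- `f` is taken from the fundamental circuit of `e` in `B₂` and the fundamental cocircuit
  -- of `e` in `B₁`, which meet in more than `e`.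
  have heE : e ∈ M.E := hB₁.subset_ground he.1
  have hC := hB₂.fundCircuit_isCircuit heE he.2
  have hK := M.fundCocircuit_isCocircuit he.1 hB₁
  obtain ⟨f, ⟨hfC, hfK⟩, hfe⟩ := (hC.isCocircuit_inter_nontrivial hK
    ⟨e, M.mem_fundCircuit e B₂, M.mem_fundCocircuit e B₁⟩).exists_ne e
  have hfB₂ : f ∈ B₂ := by
    have : f ∈ M.fundCircuit e B₂ \ {e} := ⟨hfC, hfe⟩
    exact (M.fundCircuit_sdiff_eq_inter he.2 ▸ this).2
  have hfB₁ : f ∉ B₁ := fun hf ↦ by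
    have : f ∈ M.fundCocircuit e B₁ ∩ B₁ := ⟨hfK, hf⟩
    rw [M.fundCocircuit_inter_eq he.1] at this
    exact hfe this
  have heC : e ∈ M.fundCircuit f B₁ := hB₁.mem_fundCocircuit_iff_mem_fundCircuit.1 hfK
  refine ⟨f, ⟨hfB₂, hfB₁⟩, hB₂.exchange_isBase_of_indep' hfB₂ he.2 ?_,
    hB₁.exchange_isBase_of_indep' he.1 hfB₁ ?_⟩
  · exact (hB₂.indep.mem_fundCircuit_iff (by rw [hB₂.closure_eq]; exact heE) he.2).1 hfC
  · exact (hB₁.indep.mem_fundCircuit_iff (by rw [hB₁.closure_eq]; exact hB₂.subset_ground hfB₂)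
      hfB₁).1 heC

variable {β : Type*} [AddCommMonoid β] [LinearOrder β]

def IsMaxWeightBase (M : Matroid α) (w : α → β) (B : Set α) : Prop :=
  M.IsBase B ∧ ∀ C, M.IsBase C → ∑ᶠ x ∈ C, w x ≤ ∑ᶠ x ∈ B, w x

theorem exists_isMaxWeightBase (M : Matroid α) [M.Finite] (w : α → β) :
    ∃ B, M.IsMaxWeightBase w B := by
  have hfin : {B | M.IsBase B}.Finite :=
    M.ground_finite.finite_subsets.subset fun _ hB ↦ hB.subset_ground
  obtain ⟨B, hB, hmax⟩ := exists_max_image _ (fun C ↦ ∑ᶠ x ∈ C, w x) hfin M.exists_isBase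
  exact ⟨B, hB, hmax⟩

variable [IsOrderedCancelAddMonoid β] [M.RankFinite] {w : α → β}

theorem IsMaxWeightBase.weight_le_of_exchange (hB : M.IsMaxWeightBase w B) (he : e ∈ B)
    (hf : f ∉ B) (hfe : M.IsBase (insert f B \ {e})) : w f ≤ w e := by
  have h := (add_le_add_iff_right (w e)).2 (hB.2 _ hfe)
  rw [finsum_mem_insert_sdiff_add w hB.1.finite hf he, add_comm] at h
  exact le_of_add_le_add_left h

theorem IsMaxWeightBase.exchange_of_weight_le (hB : M.IsMaxWeightBase w B) (hf : f ∈ B)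
    (he : e ∉ B) (hef : M.IsBase (insert e B \ {f})) (hw : w f ≤ w e) :
    M.IsMaxWeightBase w (insert e B \ {f}) := by
  refine ⟨hef, fun C hC ↦ (hB.2 C hC).trans ?_⟩
  refine le_of_add_le_add_right (a := w f) ?_
  rw [finsum_mem_insert_sdiff_add w hB.1.finite he hf, add_comm]
  exact (add_le_add_iff_right _).2 hw

end Matroid

theorem stmt4_general {α : Type*} (M : Matroid α) [M.Finite] (e : α)
    (w w' : α → ℝ) (hwe : w' e = w e) (hww : ∀ x ∈ M.E, x ≠ e → w' x ≤ w x)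
    (B : Set α) (hB : M.IsBase B)
    (hBmax : ∀ C, M.IsBase C → ∑ᶠ x ∈ C, w x ≤ ∑ᶠ x ∈ B, w x)
    (heB : e ∈ B) :
    ∃ B', M.IsBase B' ∧ e ∈ B' ∧
      ∀ C, M.IsBase C → ∑ᶠ x ∈ C, w' x ≤ ∑ᶠ x ∈ B', w' x := by
  have hBw : M.IsMaxWeightBase w B := ⟨hB, hBmax⟩
  obtain ⟨B', hB'⟩ := M.exists_isMaxWeightBase w'
  by_cases heB' : e ∈ B'
  · exact ⟨B', hB'.1, heB', hB'.2⟩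
  obtain ⟨f, ⟨hfB', hfB⟩, hB'ef, hBfe⟩ := hB.exists_symm_exchange hB'.1 ⟨heB, heB'⟩
  have hfe : f ≠ e := fun h ↦ hfB (h ▸ heB)
  have hw' : w' f ≤ w' e := calc
    w' f ≤ w f := hww f (hB'.1.subset_ground hfB') hfe
    _ ≤ w e := hBw.weight_le_of_exchange heB hfB hBfe
    _ = w' e := hwe.symm
  obtain ⟨hbase, hmax⟩ := hB'.exchange_of_weight_le hfB' heB' hB'ef hw'
  exact ⟨_, hbase, ⟨mem_insert e B', hfe.symm⟩, hmax⟩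

/-- If the weight of `e` is unchanged (`w' e = w e`) and all other weights
only decrease (`w' x ≤ w x`), then an element `e` belonging to a maximum `w`-weight base
also belongs to some maximum `w'`-weight base. -/
theorem stmt4 {α : Type*} (M : Matroid α) [M.Finite] (e : α) (he : e ∈ M.E)
    (w w' : α → ℝ) (hwe : w' e = w e) (hww : ∀ x ∈ M.E, x ≠ e → w' x ≤ w x)
    (B : Set α) (hB : M.IsBase B)
    (hBmax : ∀ C, M.IsBase C → ∑ᶠ x ∈ C, w x ≤ ∑ᶠ x ∈ B, w x)
    (heB : e ∈ B) :
    ∃ B', M.IsBase B' ∧ e ∈ B' ∧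
      ∀ C, M.IsBase C → ∑ᶠ x ∈ C, w' x ≤ ∑ᶠ x ∈ B', w' x :=
  stmt4_general M e w w' hwe hww B hB hBmax heB
end

section
/- Let ε ∈ (0, 1/4], let c ≥ 1 and M₀ > 0 be real numbers, and let k ≥ 1 and N ≥ 1 be integers with (1−ε)^N ≤ (ε/k)². Let V be a finite set, let f : 2^V → ℝ be monotone submodular with f(∅) ≥ 0, and let S ⊆ V. Let B ⊆ V \ S be nonempty with |B| ≤ k, and let w : B → ℝ satisfy: (i) f(S ∪ {e}) − f(S) ≤ w(e) for every e ∈ B; (ii) every e ∈ B either satisfies w(e) = (1−ε)^{j−1} M₀ for some j ∈ {1,…,N} (in which case we say e lies in bucket j) or satisfies 0 ≤ w(e) ≤ (1−ε)^N M₀; (iii) for each j ∈ {1,…,N}, at least half of the elements e of bucket j satisfy f(S ∪ {e}) − f(S) ≥ (1−ε) w(e); and (iv) Σ_{e∈B} w(e) ≥ 4 c M₀. Then for every nonempty set O ⊆ V with |O| = |B| and f(O) ≤ M₀, it holds that (1/|B|) Σ_{e∈B} (f(S ∪ {e}) − f(S)) ≥ (c/|O|) Σ_{o∈O} (f(O)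 − f(O \ {o})). -/
/-!
Summing the diminishing removal losses of `O` telescopes to at most `f O - f ∅ ≤ M₀`, so the
right-hand side is at most `c M₀ / |B|`. On the other side, the elements of `B` off the grid
carry total weight at most `k (1 - ε)^N M₀ ≤ ε² M₀ / k ≤ M₀ / 16`, so the bucketed weight is at
least `(4c - 1/16) M₀`. In every bucket at least half of the elements realise a `(1 - ε)`-fraction
of their weight as actual gain, hence the total gain is at least
`(1 - ε)/2 · (4c - 1/16) M₀ ≥ c M₀`.
-/

open Finset

def IsSubmodularOn {α : Type*} [DecidableEq α] (V : Finset α) (f : Finset α → ℝ) : Prop :=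
  ∀ A ⊆ V, ∀ B ⊆ V, f A + f B ≥ f (A ∩ B) + f (A ∪ B)

namespace IsSubmodularOn

variable {α : Type*} [DecidableEq α] {V : Finset α} {f : Finset α → ℝ}

theorem sub_erase_le_of_subset (hf : IsSubmodularOn V f) {X Y : Finset α} (hY : Y ⊆ V)
    (hXY : X ⊆ Y) {o : α} (ho : o ∈ X) :
    f Y - f (Y.erase o) ≤ f X - f (X.erase o) := by
  have h := hf X (hXY.trans hY) (Y.erase o) ((erase_subset _ _).trans hY)
  have hinter : X ∩ Y.erase o = X.erase o := by
    ext a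
    by_cases a = o <;> aesop
  have hunion : X ∪ Y.erase o = Y := by
    ext a
    by_cases a = o <;> aesop
  rw [hinter, hunion] at h
  linarith

theorem sum_sub_erase_le (hf : IsSubmodularOn V f) {O : Finset α} (hO : O ⊆ V) :
    ∑ o ∈ O, (f O - f (O.erase o)) ≤ f O - f ∅ := by
  induction O using Finset.induction_on with
  | empty => simp
  | @insert a s ha ih =>
    have hs : s ⊆ V := (subset_insert a s).trans hO
    have hloss : ∑ o ∈ s, (f (insert a s) - f ((insert a s).erase o)) ≤
        ∑ o ∈ s, (f s - f (s.erase o)) :=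
      sum_le_sum fun o ho ↦ hf.sub_erase_le_of_subset hO (subset_insert a s) ho
    rw [sum_insert ha, erase_insert ha]
    linarith [ih hs]

end IsSubmodularOn

section Buckets

variable {α : Type*} {s : Finset α} {w g : α → ℝ} {θ : ℝ}

theorem half_mul_sum_bucket_le (hθ : 0 ≤ θ) {x : ℝ} (hx : 0 ≤ x) (hg : ∀ e ∈ s, 0 ≤ g e)
    (hhalf : (s.filter (fun e => w e = x)).card ≤
      2 * (s.filter (fun e => w e = x ∧ g e ≥ θ * w e)).card) :
    θ / 2 * ∑ e ∈ s with w e = x, w e ≤ ∑ e ∈ s with w e = x, g e := by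
  set good := s.filter (fun e => w e = x ∧ g e ≥ θ * w e)
  have hweight : ∑ e ∈ s with w e = x, w e = (s.filter (fun e => w e = x)).card * x := by
    rw [sum_congr rfl fun e he ↦ (mem_filter.1 he).2, sum_const, nsmul_eq_mul]
  have hgood_sub : good ⊆ s.filter (fun e => w e = x) := fun e he ↦
    mem_filter.2 ⟨(mem_filter.1 he).1, (mem_filter.1 he).2.1⟩
  have hgood : good.card * (θ * x) ≤ ∑ e ∈ good, g e := by
    rw [← nsmul_eq_mul]
    refine card_nsmul_le_sum _ _ _ fun e he ↦ ?_
    obtain ⟨-, hwe, hge⟩ := mem_filter.1 he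
    rw [← hwe]
    exact hge
  have hcard : ((s.filter (fun e => w e = x)).card : ℝ) ≤ 2 * good.card := by
    exact_mod_cast hhalf
  calc θ / 2 * ∑ e ∈ s with w e = x, w e
      ≤ good.card * (θ * x) := by
        rw [hweight]
        nlinarith [mul_nonneg hθ hx]
    _ ≤ ∑ e ∈ good, g e := hgood
    _ ≤ ∑ e ∈ s with w e = x, g e :=
        sum_le_sum_of_subset_of_nonneg hgood_sub fun e he _ ↦ hg e (mem_filter.1 he).1

theorem half_mul_sum_bucketed_le (hθ : 0 ≤ θ) (X : Finset ℝ) (hX : ∀ x ∈ X, 0 ≤ x)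
    (hg : ∀ e ∈ s, 0 ≤ g e)
    (hhalf : ∀ x ∈ X, (s.filter (fun e => w e = x)).card ≤
      2 * (s.filter (fun e => w e = x ∧ g e ≥ θ * w e)).card) :
    θ / 2 * ∑ e ∈ s with w e ∈ X, w e ≤ ∑ e ∈ s, g e :=
  calc θ / 2 * ∑ e ∈ s with w e ∈ X, w e
      = ∑ x ∈ X, θ / 2 * ∑ e ∈ s with w e = x, w e := by
        rw [← sum_fiberwise_eq_sum_filter, mul_sum]
    _ ≤ ∑ x ∈ X, ∑ e ∈ s with w e = x, g e :=
        sum_le_sum fun x hx ↦ half_mul_sum_bucket_le hθ (hX x hx) hg (hhalf x hx)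
    _ = ∑ e ∈ s with w e ∈ X, g e := sum_fiberwise_eq_sum_filter _ _ _ _
    _ ≤ ∑ e ∈ s, g e := sum_le_sum_of_subset_of_nonneg (filter_subset _ _)
        fun e he _ ↦ hg e he

theorem sum_filter_notMem_le {X : Finset ℝ} {b : ℝ} {k : ℕ} (hb : 0 ≤ b) (hs : s.card ≤ k)
    (hw : ∀ e ∈ s, w e ∈ X ∨ w e ≤ b) :
    ∑ e ∈ s with w e ∉ X, w e ≤ k * b :=
  calc ∑ e ∈ s with w e ∉ X, w e
      ≤ (s.filter (fun e => w e ∉ X)).card * b := by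
        rw [← nsmul_eq_mul]
        refine sum_le_card_nsmul _ _ _ fun e he ↦ ?_
        obtain ⟨heB, hoff⟩ := mem_filter.1 he
        exact (hw e heB).resolve_left hoff
    _ ≤ k * b := by
        gcongr
        exact (card_filter_le _ _).trans hs

end Buckets

theorem natCast_mul_one_sub_pow_mul_le {ε M₀ : ℝ} {k N : ℕ} (hε0 : 0 < ε) (hε1 : ε ≤ 1 / 4)
    (hM : 0 ≤ M₀) (hk : 1 ≤ k) (hNk : (1 - ε) ^ N ≤ (ε / k) ^ 2) :
    k * ((1 - ε) ^ N * M₀) ≤ M₀ / 16 := by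
  have hkR : (1 : ℝ) ≤ k := by exact_mod_cast hk
  have hε2 : ε ^ 2 / k ≤ 1 / 16 := (div_le_self (sq_nonneg ε) hkR).trans (by nlinarith)
  calc k * ((1 - ε) ^ N * M₀) ≤ k * ((ε / k) ^ 2 * M₀) := by gcongr
    _ = ε ^ 2 / k * M₀ := by field_simp
    _ ≤ M₀ / 16 := by nlinarith
theorem stmt6_general {α : Type*} [DecidableEq α] (ε c M₀ : ℝ) (k N : ℕ)
    (hε0 : 0 < ε) (hε1 : ε ≤ 1 / 4) (hc : 1 ≤ c) (hM : 0 < M₀)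
    (hk : 1 ≤ k) (hNk : (1 - ε) ^ N ≤ (ε / k) ^ 2)
    (V : Finset α) (f : Finset α → ℝ)
    (hsub : ∀ A ⊆ V, ∀ B ⊆ V, f A + f B ≥ f (A ∩ B) + f (A ∪ B))
    (hmono : ∀ A B : Finset α, A ⊆ B → B ⊆ V → f A ≤ f B)
    (hf0 : f ∅ ≥ 0)
    (S : Finset α) (hS : S ⊆ V)
    (B : Finset α) (hBsub : B ⊆ V \ S) (hBk : B.card ≤ k)
    (w : α → ℝ)
    (hbucket : ∀ e ∈ B,
      (∃ j ∈ Finset.Icc 1 N, w e = (1 - ε) ^ (j - 1) * M₀) ∨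
      (0 ≤ w e ∧ w e ≤ (1 - ε) ^ N * M₀))
    (hhalf : ∀ j ∈ Finset.Icc 1 N,
      (B.filter (fun e => w e = (1 - ε) ^ (j - 1) * M₀)).card ≤
        2 * (B.filter (fun e => w e = (1 - ε) ^ (j - 1) * M₀ ∧
          f (insert e S) - f S ≥ (1 - ε) * w e)).card)
    (hwsum : ∑ e ∈ B, w e ≥ 4 * c * M₀) :
    ∀ O ⊆ V, O.Nonempty → O.card = B.card → f O ≤ M₀ →
      (1 / (B.card : ℝ)) * ∑ e ∈ B, (f (insert e S) - f S) ≥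
        (c / (O.card : ℝ)) * ∑ o ∈ O, (f O - f (O.erase o)) := by
  intro O hOV _ hOcard hOM
  set grid := (Icc 1 N).image fun j => (1 - ε) ^ (j - 1) * M₀
  have hgrid_nonneg : ∀ x ∈ grid, 0 ≤ x := by
    simp only [grid, forall_mem_image]
    exact fun j _ ↦ mul_nonneg (pow_nonneg (by linarith) _) hM.le
  have hloss : ∑ o ∈ O, (f O - f (O.erase o)) ≤ M₀ := by
    linarith [IsSubmodularOn.sum_sub_erase_le hsub hOV]
  have hgain_nonneg : ∀ e ∈ B, 0 ≤ f (insert e S) - f S := fun e he ↦ by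
    have heV := (mem_sdiff.1 (hBsub he)).1
    linarith [hmono S _ (subset_insert e S) (insert_subset heV hS)]
  have hon_grid_or_le : ∀ e ∈ B, w e ∈ grid ∨ w e ≤ (1 - ε) ^ N * M₀ := fun e he ↦
    (hbucket e he).imp (fun ⟨j, hj, hwj⟩ ↦ mem_image.2 ⟨j, hj, hwj.symm⟩) And.right
  have hoff_grid : ∑ e ∈ B with w e ∉ grid, w e ≤ M₀ / 16 :=
    (sum_filter_notMem_le (mul_nonneg (pow_nonneg (by linarith) _) hM.le) hBk
      hon_grid_or_le).trans (natCast_mul_one_sub_pow_mul_le hε0 hε1 hM.le hk hNk)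
  have hgain : (1 - ε) / 2 * ∑ e ∈ B with w e ∈ grid, w e ≤
      ∑ e ∈ B, (f (insert e S) - f S) :=
    half_mul_sum_bucketed_le (by linarith) grid hgrid_nonneg hgain_nonneg
      (by simpa only [grid, forall_mem_image] using hhalf)
  have hon_grid : 4 * c * M₀ - M₀ / 16 ≤ ∑ e ∈ B with w e ∈ grid, w e := by
    linarith [sum_filter_add_sum_filter_not B (fun e => w e ∈ grid) w]
  have htotal : c * M₀ ≤ ∑ e ∈ B, (f (insert e S) - f S) :=
    calc c * M₀ ≤ 3 / 8 * (4 * c * M₀ - M₀ / 16) := by nlinarith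
      _ ≤ (1 - ε) / 2 * ∑ e ∈ B with w e ∈ grid, w e :=
          mul_le_mul (by linarith) hon_grid (by nlinarith) (by linarith)
      _ ≤ _ := hgain
  calc c / (O.card : ℝ) * ∑ o ∈ O, (f O - f (O.erase o))
      ≤ c / (B.card : ℝ) * M₀ := by
        rw [hOcard]
        gcongr
    _ = 1 / (B.card : ℝ) * (c * M₀) := by ring
    _ ≤ 1 / (B.card : ℝ) * ∑ e ∈ B, (f (insert e S) - f S) := by gcongr

/-- the key greedy-gain vs. OPT-loss inequality. If the cached weights `w`
on `B ⊆ V \ S` lie on the geometric grid, at least half of each bucket is up to date,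
and the total cached weight is at least `4 c M₀`, then the average marginal gain of the
elements of `B` on top of `S` is at least `c` times the average loss `f O - f (O \ {o})`
for any `O` with `|O| = |B|` and `f O ≤ M₀`. -/
theorem stmt6 {α : Type*} [DecidableEq α] (ε c M₀ : ℝ) (k N : ℕ)
    (hε0 : 0 < ε) (hε1 : ε ≤ 1 / 4) (hc : 1 ≤ c) (hM : 0 < M₀)
    (hk : 1 ≤ k) (hN : 1 ≤ N) (hNk : (1 - ε) ^ N ≤ (ε / k) ^ 2)
    (V : Finset α) (f : Finset α → ℝ)
    (hsub : ∀ A ⊆ V, ∀ B ⊆ V, f A + f B ≥ f (A ∩ B) + f (A ∪ B))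
    (hmono : ∀ A B : Finset α, A ⊆ B → B ⊆ V → f A ≤ f B)
    (hf0 : f ∅ ≥ 0)
    (S : Finset α) (hS : S ⊆ V)
    (B : Finset α) (hBsub : B ⊆ V \ S) (hBne : B.Nonempty) (hBk : B.card ≤ k)
    (w : α → ℝ)
    (hwub : ∀ e ∈ B, f (insert e S) - f S ≤ w e)
    (hbucket : ∀ e ∈ B,
      (∃ j ∈ Finset.Icc 1 N, w e = (1 - ε) ^ (j - 1) * M₀) ∨
      (0 ≤ w e ∧ w e ≤ (1 - ε) ^ N * M₀))
    (hhalf : ∀ j ∈ Finset.Icc 1 N,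
      (B.filter (fun e => w e = (1 - ε) ^ (j - 1) * M₀)).card ≤
        2 * (B.filter (fun e => w e = (1 - ε) ^ (j - 1) * M₀ ∧
          f (insert e S) - f S ≥ (1 - ε) * w e)).card)
    (hwsum : ∑ e ∈ B, w e ≥ 4 * c * M₀) :
    ∀ O ⊆ V, O.Nonempty → O.card = B.card → f O ≤ M₀ →
      (1 / (B.card : ℝ)) * ∑ e ∈ B, (f (insert e S) - f S) ≥
        (c / (O.card : ℝ)) * ∑ o ∈ O, (f O - f (O.erase o)) :=
  stmt6_general ε c M₀ k N hε0 hε1 hc hM hk hNk V f hsub hmono hf0 S hS B hBsub hBk w hbucket hhalf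
    hwsum
end

section
/- Let G be a finite connected simple graph, let T₁ and T₂ be spanning trees of G, let v be a vertex of degree 1 in T₁ whose unique incident edge in T₁ is e = {v, u}, and suppose e ∉ T₂. Let w be the vertex adjacent to v on the unique path in T₂ from v to u, and let f = {v, w} ∈ T₂. Then both (T₁ \ {e}) ∪ {f} and (T₂ \ {f}) ∪ {e} are spanning trees of G. Moreover, f is the unique edge of T₂ incident to v whose other endpoint lies on the unique path in T₂ from v to u. -/
/-- `T` is (the edge set of) a spanning tree of `G`: a set of edges of `G` such that the
graph on the vertices of `G` with edge set `T` is a tree. -/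
def IsSpanningTreeEdges {V : Type*} (G : SimpleGraph V) (T : Set (Sym2 V)) : Prop :=
  T ⊆ G.edgeSet ∧ (SimpleGraph.fromEdgeSet T).IsTree

/-!
Both new edge sets come from one exchange: if the edge `f` lies on the path of a tree `H` from
`a` to `b`, then `H - f + ab` is a tree. Indeed `a` and `b` lie in different components of
`H - f` (a path between them avoiding `f` would contradict uniqueness of paths in `H`), so the
edge `ab` closes no cycle and joins the two components. For `(T₂ \ {f}) ∪ {e}` the path is `p`,
whose first edge is `f`; for `(T₁ \ {e}) ∪ {f}` it is the `T₁`-path from `v` to `w`, whose first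
edge is `e` because `v` is a leaf of `T₁`. Finally, a neighbour of `v` on a path of a tree
starting at `v` must be the second vertex of that path, which gives the uniqueness of `w`.
-/

namespace SimpleGraph

variable {V : Type*} {H : SimpleGraph V}

theorem Connected.reachable_deleteEdges_or (hH : H.Connected) {x y : V} (hxy : H.Adj x y)
    (z : V) :
    (H.deleteEdges {s(x, y)}).Reachable z x ∨ (H.deleteEdges {s(x, y)}).Reachable z y := by
  classical
  obtain ⟨P, hP⟩ := hH.exists_isPath z x
  by_cases heP : s(x, y) ∈ P.edges
  · have hyP := P.snd_mem_support_of_mem_edges heP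
    have hxP₁ := Walk.endpoint_notMem_support_takeUntil hP hyP hxy.ne
    refine .inr (reachable_deleteEdges_iff_exists_walk.mpr ⟨P.takeUntil y hyP, fun h => ?_⟩)
    exact hxP₁ ((P.takeUntil y hyP).fst_mem_support_of_mem_edges h)
  · exact .inl (reachable_deleteEdges_iff_exists_walk.mpr ⟨P, heP⟩)

theorem IsAcyclic.not_reachable_deleteEdges_of_mem_edges (hH : H.IsAcyclic) {a b x y : V}
    {p : H.Walk a b} (hp : p.IsPath) (hf : s(x, y) ∈ p.edges) :
    ¬(H.deleteEdges {s(x, y)}).Reachable a b := by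
  classical
  rintro hab
  obtain ⟨q, hq⟩ := reachable_deleteEdges_iff_exists_walk.mp hab
  have : q.toPath = ⟨p, hp⟩ := (hH.subsingleton_path a b).elim _ _
  exact hq (q.edges_toPath_subset_edges (congrArg Subtype.val this ▸ hf))

theorem IsTree.deleteEdges_sup_edge (hH : H.IsTree) {a b x y : V} {p : H.Walk a b}
    (hp : p.IsPath) (hf : s(x, y) ∈ p.edges) :
    (H.deleteEdges {s(x, y)} ⊔ edge a b).IsTree := by
  set D := H.deleteEdges {s(x, y)}
  have hsep : ¬D.Reachable a b := hH.isAcyclic.not_reachable_deleteEdges_of_mem_edges hp hf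
  have hside := hH.connected.reachable_deleteEdges_or (p.adj_of_mem_edges hf)
  have hmono : ∀ {c d : V}, D.Reachable c d → (D ⊔ edge a b).Reachable c d :=
    fun h => h.mono le_sup_left
  have hne : a ≠ b := fun h => hsep (h ▸ .rfl)
  have hab : (D ⊔ edge a b).Reachable a b := Adj.reachable (Or.inr (by simp [edge_adj, hne]))
  have hxy : (D ⊔ edge a b).Reachable x y := by
    rcases hside a with hax | hay <;> rcases hside b with hbx | hby
    · exact (hsep (hax.trans hbx.symm)).elim
    · exact (hmono hax).symm.trans (hab.trans (hmono hby))
    · exact (hmono hbx).symm.trans (hab.symm.trans (hmono hay))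
    · exact (hsep (hay.trans hby.symm)).elim
  refine ⟨(connected_iff_exists_forall_reachable _).mpr ⟨x, fun z => ?_⟩,
    (hH.isAcyclic.anti (deleteEdges_le _)).sup_edge_of_not_reachable hsep⟩
  rcases hside z with hzx | hzy
  · exact (hmono hzx).symm
  · exact hxy.trans (hmono hzy).symm

theorem fromEdgeSet_sdiff_union_singleton (T : Set (Sym2 V)) (e : Sym2 V) (a b : V) :
    fromEdgeSet (T \ {e} ∪ {s(a, b)}) = (fromEdgeSet T).deleteEdges {e} ⊔ edge a b := by
  rw [fromEdgeSet_union, fromEdgeSet_sdiff, deleteEdges, edge]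

end SimpleGraph

open SimpleGraph

theorem IsSpanningTreeEdges.exchange {V : Type*} {G : SimpleGraph V} {T : Set (Sym2 V)}
    (hT : IsSpanningTreeEdges G T) {a b x y : V} (hab : G.Adj a b)
    {p : (fromEdgeSet T).Walk a b} (hp : p.IsPath) (hf : s(x, y) ∈ p.edges) :
    IsSpanningTreeEdges G (T \ {s(x, y)} ∪ {s(a, b)}) := by
  refine ⟨Set.union_subset (Set.sdiff_subset.trans hT.1) (Set.singleton_subset_iff.mpr hab), ?_⟩
  rw [fromEdgeSet_sdiff_union_singleton]
  exact hT.2.deleteEdges_sup_edge hp hf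

theorem stmt8_general {V : Type*} (G : SimpleGraph V)
    (T₁ T₂ : Set (Sym2 V))
    (hT₁ : IsSpanningTreeEdges G T₁) (hT₂ : IsSpanningTreeEdges G T₂)
    (v u : V) (he : s(v, u) ∈ T₁)
    (hleaf : ∀ f ∈ T₁, v ∈ f → f = s(v, u))
    (p : (SimpleGraph.fromEdgeSet T₂).Walk v u) (hp : p.IsPath)
    (w : V) (hw : s(v, w) ∈ T₂)
    (hadj : p.support[1]? = some w) :
    IsSpanningTreeEdges G ((T₁ \ {s(v, u)}) ∪ {s(v, w)}) ∧
    IsSpanningTreeEdges G ((T₂ \ {s(v, w)}) ∪ {s(v, u)}) ∧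
    ∀ w' : V, s(v, w') ∈ T₂ → w' ∈ p.support → w' = w := by
  have hvu : G.Adj v u := hT₁.1 he
  have hvw : G.Adj v w := hT₂.1 hw
  have hnil : ¬p.Nil := Walk.not_nil_of_ne hvu.ne
  have hsnd : p.snd = w := Option.some.inj <|
    (p.getVert_eq_support_getElem? (Walk.not_nil_iff_lt_length.mp hnil)).trans hadj
  refine ⟨?_, hT₂.exchange hvu hp (hsnd ▸ p.mk_start_snd_mem_edges hnil), fun w' hw' hw'p => ?_⟩
  · obtain ⟨q, hq⟩ := hT₁.2.connected.exists_isPath v w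
    have hstart := q.mk_start_snd_mem_edges (Walk.not_nil_of_ne hvw.ne)
    have hstart₁ : s(v, q.snd) ∈ T₁ := (edgeSet_fromEdgeSet T₁ ▸ q.edges_subset_edgeSet hstart).1
    rw [hleaf _ hstart₁ (Sym2.mem_mk_left _ _)] at hstart
    exact hT₁.exchange hvw hq hstart
  · have hadj' : (fromEdgeSet T₂).Adj v w' := ⟨hw', (hT₂.1 hw').ne⟩
    exact (hT₂.2.isAcyclic.eq_snd_of_adj_start hp hadj' hw'p).trans hsnd

/-- let `v` be a leaf of the spanning tree `T₁` with unique incident edge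
`e = s(v, u)`, with `e ∉ T₂`. Let `w` be the vertex adjacent to `v` on the unique path
`p` from `v` to `u` in `T₂`, so `f = s(v, w) ∈ T₂`. Then both `(T₁ \ {e}) ∪ {f}` and
`(T₂ \ {f}) ∪ {e}` are spanning trees of `G`, and `f` is the unique edge of `T₂`
incident to `v` whose other endpoint lies on the path `p`. -/
theorem stmt8 {V : Type*} [Fintype V] (G : SimpleGraph V) (hG : G.Connected)
    (T₁ T₂ : Set (Sym2 V))
    (hT₁ : IsSpanningTreeEdges G T₁) (hT₂ : IsSpanningTreeEdges G T₂)
    (v u : V) (he : s(v, u) ∈ T₁)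
    (hleaf : ∀ f ∈ T₁, v ∈ f → f = s(v, u))
    (heT₂ : s(v, u) ∉ T₂)
    (p : (SimpleGraph.fromEdgeSet T₂).Walk v u) (hp : p.IsPath)
    (w : V) (hw : s(v, w) ∈ T₂)
    (hadj : p.support[1]? = some w) :
    IsSpanningTreeEdges G ((T₁ \ {s(v, u)}) ∪ {s(v, w)}) ∧
    IsSpanningTreeEdges G ((T₂ \ {s(v, w)}) ∪ {s(v, u)}) ∧
    ∀ w' : V, s(v, w') ∈ T₂ → w' ∈ p.support → w' = w :=
  stmt8_general G T₁ T₂ hT₁ hT₂ v u he hleaf p hp w hw hadj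
end
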